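/- Let I = {1,…,κ} with κ ≥ 2, and for each i ∈ I let A_i ∈ ℝ^{2×2} be invertible with ‖A_i‖ < 1. Suppose there exist θ ∈ S¹ and 0 < β < π/2 such that A_i(cl X(θ,β)) ⊂ X(θ,β) and A_iᵀ(cl X(θ,β)) ⊂ X(θ,β) for every i ∈ I. Then for all finite words 𝚒, 𝚓, α₁(A_{𝚒𝚓}) ≥ cos²(β)·α₁(A_𝚒)·α₁(A_𝚓). -/

import Mathlib

open MeasureTheory Filter Matrix Real Set

noncomputable section

abbrev E2 := EuclideanSpace ℝ (Fin 2)

noncomputable def mLin (A : Matrix (Fin 2) (Fin 2) ℝ) : E2 →L[ℝ] E2 :=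
  LinearMap.toContinuousLinearMap (Matrix.toEuclideanLin A)

/-- largest singular value = operator norm -/
noncomputable def a1 (A : Matrix (Fin 2) (Fin 2) ℝ) : ℝ := ‖mLin A‖

/-- smallest singular value -/
noncomputable def a2 (A : Matrix (Fin 2) (Fin 2) ℝ) : ℝ := |A.det| / a1 A

/-- product of the matrices along a finite word -/
noncomputable def wprod {κ : ℕ} (A : Fin κ → Matrix (Fin 2) (Fin 2) ℝ) (l : List (Fin κ)) :
    Matrix (Fin 2) (Fin 2) ℝ := (l.map A).prod

/-- the cone X(θ,β) -/
def cone (θ : E2) (β : ℝ) : Set E2 :=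
  {x | x ≠ 0 ∧ Real.cos (β / 2) * ‖x‖ < |(inner ℝ θ x : ℝ)|}

/-- unoriented angle between the lines spanned by two vectors -/
noncomputable def uangle (u v : E2) : ℝ :=
  Real.arccos (|(inner ℝ u v : ℝ)| / (‖u‖ * ‖v‖))

open scoped InnerProductSpace

/-! Write `f` for `A_𝚒` acting on `ℝ²`. Products of the `A_i` and of the `A_iᵀ` map the cone
into itself, hence so does `f* f`. A Perron–Frobenius argument then puts a top right singular
vector `v` of `f` into the closed cone: iterating `f* f` from a point of the cone kills, after
renormalising, its component along the other eigenvector. Two vectors of the closed cone make an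
angle at most `β`, so `‖f y‖ ≥ ‖f‖ |⟪v, y⟫| ≥ cos β ‖f‖ ‖y‖` for every `y` in the closed cone.
Applying this to `A_𝚓` at `θ`, and then to `A_𝚒` at `A_𝚓 θ`, which is again in the cone, gives
the claim. -/

section InnerProductSpace

variable {F : Type*} [NormedAddCommGroup F] [InnerProductSpace ℝ F]

theorem exists_inner_ne_zero_of_isOpen {K : Set F} (hKo : IsOpen K) (hKne : K.Nonempty) {v : F}
    (hv : v ≠ 0) : ∃ x ∈ K, ⟪v, x⟫_ℝ ≠ 0 := by
  by_contra! h
  have hker : LinearMap.ker (innerₛₗ ℝ v) = ⊤ :=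
    Submodule.eq_top_of_nonempty_interior' _
      (hKne.mono (hKo.subset_interior_iff.mpr fun x hx => by simpa using h x hx))
  have hvv : v ∈ LinearMap.ker (innerₛₗ ℝ v) := hker ▸ Submodule.mem_top
  exact hv (by simpa using hvv)

theorem two_mul_sq_sub_one_mul_le_abs_inner {θ y z : F} (hθ : ‖θ‖ = 1) {c : ℝ} (hc : 0 ≤ c)
    (hy : c * ‖y‖ ≤ |⟪θ, y⟫_ℝ|) (hz : c * ‖z‖ ≤ |⟪θ, z⟫_ℝ|) :
    (2 * c ^ 2 - 1) * (‖y‖ * ‖z‖) ≤ |⟪y, z⟫_ℝ| := by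
  have ha : |⟪θ, y⟫_ℝ| ≤ ‖y‖ := by simpa [hθ] using abs_real_inner_le_norm θ y
  have hb : |⟪θ, z⟫_ℝ| ≤ ‖z‖ := by simpa [hθ] using abs_real_inner_le_norm θ z
  have ha2 : ⟪θ, y⟫_ℝ ^ 2 ≤ ‖y‖ ^ 2 := sq_le_sq.2 (by rwa [abs_norm])
  have hb2 : ⟪θ, z⟫_ℝ ^ 2 ≤ ‖z‖ ^ 2 := sq_le_sq.2 (by rwa [abs_norm])
  rcases le_or_gt c 1 with hc1 | hc1
  swap
  · have hy0 : ‖y‖ = 0 := by nlinarith [norm_nonneg y]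
    simp [hy0]
  -- Cauchy–Schwarz for the components of `y` and `z` orthogonal to `θ`
  have hcs : (⟪y, z⟫_ℝ - ⟪θ, y⟫_ℝ * ⟪θ, z⟫_ℝ) ^ 2 ≤
      (‖y‖ ^ 2 - ⟪θ, y⟫_ℝ ^ 2) * (‖z‖ ^ 2 - ⟪θ, z⟫_ℝ ^ 2) := by
    have h := real_inner_mul_inner_self_le (y - ⟪θ, y⟫_ℝ • θ) (z - ⟪θ, z⟫_ℝ • θ)
    simp only [inner_sub_left, inner_sub_right, real_inner_smul_left, real_inner_smul_right,
      real_inner_self_eq_norm_sq, norm_smul, Real.norm_eq_abs, hθ, mul_one, sq_abs,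
      real_inner_comm θ y, real_inner_comm θ z] at h
    ring_nf at h ⊢
    linarith
  have hy' : (‖y‖ ^ 2 - ⟪θ, y⟫_ℝ ^ 2) ≤ (1 - c ^ 2) * ‖y‖ ^ 2 := by
    nlinarith [sq_abs ⟪θ, y⟫_ℝ, mul_nonneg hc (norm_nonneg y)]
  have hz' : (‖z‖ ^ 2 - ⟪θ, z⟫_ℝ ^ 2) ≤ (1 - c ^ 2) * ‖z‖ ^ 2 := by
    nlinarith [sq_abs ⟪θ, z⟫_ℝ, mul_nonneg hc (norm_nonneg z)]
  have hperp : |⟪y, z⟫_ℝ - ⟪θ, y⟫_ℝ * ⟪θ, z⟫_ℝ| ≤ (1 - c ^ 2) * (‖y‖ * ‖z‖) := by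
    refine abs_le_of_sq_le_sq ?_ (mul_nonneg (by nlinarith) (by positivity))
    calc _ ≤ _ := hcs
      _ ≤ (1 - c ^ 2) * ‖y‖ ^ 2 * ((1 - c ^ 2) * ‖z‖ ^ 2) :=
          mul_le_mul hy' hz' (by linarith) (by nlinarith)
      _ = _ := by ring
  have hab : c * ‖y‖ * (c * ‖z‖) ≤ |⟪θ, y⟫_ℝ * ⟪θ, z⟫_ℝ| := by
    rw [abs_mul]; exact mul_le_mul hy hz (by positivity) (abs_nonneg _)
  have := abs_sub_abs_le_abs_sub (⟪θ, y⟫_ℝ * ⟪θ, z⟫_ℝ) ⟪y, z⟫_ℝ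
  rw [abs_sub_comm] at this
  nlinarith

end InnerProductSpace

theorem mem_closure_of_mapsTo_of_apply_eq_smul {V : Type*} [NormedAddCommGroup V]
    [NormedSpace ℝ V] {T : V →ₗ[ℝ] V} {K : Set V} (hK : ∀ a : ℝ, a ≠ 0 → ∀ x ∈ K, a • x ∈ K)
    (hTK : MapsTo T K K) {v w : V} {s t c : ℝ} (hv : T v = s • v) (hw : T w = t • w)
    (hts : |t| < s) (hx : v + c • w ∈ K) : v ∈ closure K := by
  have hs : 0 < s := (abs_nonneg t).trans_lt hts
  set u : ℕ → V := fun n => v + ((t / s) ^ n * c) • w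
  -- `u n = (s⁻¹ • T)^[n] (v + c • w)`
  have hu : ∀ n, u n ∈ K := by
    intro n
    induction n with
    | zero => simpa [u] using hx
    | succ n ih =>
      have hstep : u (n + 1) = s⁻¹ • T (u n) := by
        simp only [u, map_add, map_smul, hv, hw]
        match_scalars
        · field_simp
        · rw [pow_succ]; field_simp
      exact hstep ▸ hK _ (inv_ne_zero hs.ne') _ (hTK ih)
  have hr : Tendsto (fun n : ℕ => (t / s) ^ n) atTop (nhds 0) :=
    tendsto_pow_atTop_nhds_zero_of_abs_lt_one (by rwa [abs_div, abs_of_pos hs, div_lt_one hs])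
  have hlim : Tendsto u atTop (nhds v) := by
    simpa using tendsto_const_nhds.add ((hr.mul_const c).smul_const w)
  exact mem_closure_of_tendsto hlim (Eventually.of_forall hu)

namespace Orientation

variable {F : Type*} [NormedAddCommGroup F] [InnerProductSpace ℝ F] [Fact (Module.finrank ℝ F = 2)]
  (o : Orientation ℝ F (Fin 2))

theorem inner_smul_add_inner_rightAngleRotation_smul {v : F} (hv : ‖v‖ = 1) (x : F) :
    ⟪v, x⟫_ℝ • v + ⟪o.rightAngleRotation v, x⟫_ℝ • o.rightAngleRotation v = x := by
  refine ext_inner_left ℝ fun z => ?_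
  have h := o.inner_mul_inner_add_areaForm_mul_areaForm v x z
  rw [hv, one_pow, one_mul, ← o.inner_rightAngleRotation_left,
    ← o.inner_rightAngleRotation_left] at h
  rw [inner_add_right, real_inner_smul_right, real_inner_smul_right, real_inner_comm v z,
    real_inner_comm (o.rightAngleRotation v) z]
  exact h.trans (real_inner_comm z x)

end Orientation

namespace ContinuousLinearMap

variable {F : Type*} [NormedAddCommGroup F] [InnerProductSpace ℝ F]

theorem exists_norm_eq_one_norm_apply_eq_opNorm [FiniteDimensional ℝ F] [Nontrivial F]
    (f : F →L[ℝ] F) : ∃ v : F, ‖v‖ = 1 ∧ ‖f v‖ = ‖f‖ := by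
  obtain ⟨v, hv, hmax⟩ := (isCompact_sphere (0 : F) 1).exists_isMaxOn
    (NormedSpace.sphere_nonempty.mpr zero_le_one) (continuous_norm.comp f.continuous).continuousOn
  rw [mem_sphere_zero_iff_norm] at hv
  refine ⟨v, hv, le_antisymm (by simpa [hv] using f.le_opNorm v) ?_⟩
  exact opNorm_le_of_unit_norm (norm_nonneg _) fun x hx => hmax (mem_sphere_zero_iff_norm.mpr hx)

variable [CompleteSpace F]

theorem adjoint_apply_apply_eq_of_norm_apply_eq_opNorm (f : F →L[ℝ] F) {v : F} (hv : ‖v‖ = 1)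
    (hfv : ‖f v‖ = ‖f‖) : adjoint f (f v) = ‖f‖ ^ 2 • v := by
  have hle : ‖adjoint f (f v)‖ ≤ ‖f‖ ^ 2 := by
    calc ‖adjoint f (f v)‖ = ‖(adjoint f ∘L f) v‖ := rfl
      _ ≤ ‖adjoint f ∘L f‖ * ‖v‖ := le_opNorm _ _
      _ = ‖f‖ ^ 2 := by rw [norm_adjoint_comp_self, hv]; ring
  have hinner : ⟪adjoint f (f v), v⟫_ℝ = ‖f‖ ^ 2 := by
    rw [adjoint_inner_left, real_inner_self_eq_norm_sq, hfv]
  have hsq : ‖adjoint f (f v) - ‖f‖ ^ 2 • v‖ ^ 2 ≤ 0 := by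
    rw [norm_sub_sq_real, real_inner_smul_right, hinner, norm_smul, hv, mul_one,
      Real.norm_of_nonneg (by positivity)]
    nlinarith [pow_le_pow_left₀ (norm_nonneg _) hle 2]
  rw [← sub_eq_zero, ← norm_eq_zero]
  exact pow_eq_zero_iff two_ne_zero |>.mp (le_antisymm hsq (sq_nonneg _))

theorem opNorm_mul_abs_inner_le (f : F →L[ℝ] F) {v : F} (hv : ‖v‖ = 1) (hfv : ‖f v‖ = ‖f‖)
    (y : F) : ‖f‖ * |⟪v, y⟫_ℝ| ≤ ‖f y‖ := by
  rcases (norm_nonneg f).eq_or_lt with h0 | hpos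
  · simp [← h0]
  refine le_of_mul_le_mul_left ?_ hpos
  calc ‖f‖ * (‖f‖ * |⟪v, y⟫_ℝ|) = |⟪‖f‖ ^ 2 • v, y⟫_ℝ| := by
        rw [real_inner_smul_left, abs_mul, abs_of_nonneg (by positivity : (0 : ℝ) ≤ ‖f‖ ^ 2)]
        ring
    _ = |⟪f v, f y⟫_ℝ| := by
        rw [← adjoint_apply_apply_eq_of_norm_apply_eq_opNorm f hv hfv, adjoint_inner_left]
    _ ≤ ‖f v‖ * ‖f y‖ := abs_real_inner_le_norm _ _
    _ = ‖f‖ * ‖f y‖ := by rw [hfv]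

theorem norm_apply_eq_opNorm_of_adjoint_apply_apply_eq (f : F →L[ℝ] F)
    (hf : ∀ y, adjoint f (f y) = ‖f‖ ^ 2 • y) {u : F} (hu : ‖u‖ = 1) : ‖f u‖ = ‖f‖ := by
  refine (sq_eq_sq₀ (norm_nonneg _) (norm_nonneg _)).1 ?_
  rw [← real_inner_self_eq_norm_sq, ← adjoint_inner_right, hf, real_inner_smul_right,
    real_inner_self_eq_norm_sq, hu]
  ring

theorem adjoint_apply_apply_rightAngleRotation_eq_of_norm_apply_eq_opNorm
    [Fact (Module.finrank ℝ F = 2)] (f : F →L[ℝ] F) (o : Orientation ℝ F (Fin 2)) {v : F}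
    (hv : ‖v‖ = 1) (hfv : ‖f v‖ = ‖f‖) :
    adjoint f (f (o.rightAngleRotation v)) =
      ‖f (o.rightAngleRotation v)‖ ^ 2 • o.rightAngleRotation v := by
  set w := o.rightAngleRotation v
  have hv_w : ⟪v, adjoint f (f w)⟫_ℝ = 0 := by
    calc ⟪v, adjoint f (f w)⟫_ℝ = ⟪f v, f w⟫_ℝ := adjoint_inner_right f v (f w)
      _ = ⟪adjoint f (f v), w⟫_ℝ := (adjoint_inner_left f w (f v)).symm
      _ = 0 := by
        rw [f.adjoint_apply_apply_eq_of_norm_apply_eq_opNorm hv hfv, real_inner_smul_left,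
          real_inner_comm, o.inner_rightAngleRotation_self, mul_zero]
  have hw_w : ⟪w, adjoint f (f w)⟫_ℝ = ‖f w‖ ^ 2 := by
    rw [← real_inner_self_eq_norm_sq]; exact adjoint_inner_right f w (f w)
  rw [← o.inner_smul_add_inner_rightAngleRotation_smul hv (adjoint f (f w)), hv_w, hw_w,
    zero_smul, zero_add]

theorem exists_mem_closure_norm_eq_one_norm_apply_eq_opNorm [Fact (Module.finrank ℝ F = 2)]
    (f : F →L[ℝ] F) {K : Set F} (hKo : IsOpen K) (hKne : K.Nonempty)
    (hK : ∀ a : ℝ, a ≠ 0 → ∀ x ∈ K, a • x ∈ K)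
    (hfK : MapsTo (adjoint f ∘L f) K K) :
    ∃ v ∈ closure K, ‖v‖ = 1 ∧ ‖f v‖ = ‖f‖ := by
  have : FiniteDimensional ℝ F := .of_fact_finrank_eq_succ 1
  have : Nontrivial F := Module.nontrivial_of_finrank_eq_succ (Fact.out : Module.finrank ℝ F = 2)
  obtain ⟨v, hv, hfv⟩ := f.exists_norm_eq_one_norm_apply_eq_opNorm
  let o : Orientation ℝ F (Fin 2) := (Module.finBasisOfFinrankEq ℝ F Fact.out).orientation
  set w := o.rightAngleRotation v
  set T := adjoint f ∘L f
  have hw : ‖w‖ = 1 := by simp [w, hv]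
  have hTv : T v = ‖f‖ ^ 2 • v := f.adjoint_apply_apply_eq_of_norm_apply_eq_opNorm hv hfv
  have hTw : T w = ‖f w‖ ^ 2 • w :=
    f.adjoint_apply_apply_rightAngleRotation_eq_of_norm_apply_eq_opNorm o hv hfv
  have hv0 : v ≠ 0 := by rintro rfl; simp at hv
  obtain ⟨x, hxK, hvx⟩ := exists_inner_ne_zero_of_isOpen hKo hKne hv0
  have hx : ⟪v, x⟫_ℝ • v + ⟪w, x⟫_ℝ • w = x := o.inner_smul_add_inner_rightAngleRotation_smul hv x
  rcases (show ‖f w‖ ≤ ‖f‖ by simpa [hw] using f.le_opNorm w).lt_or_eq with hlt | heq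
  · refine ⟨v, ?_, hv, hfv⟩
    refine mem_closure_of_mapsTo_of_apply_eq_smul (T := (T : F →ₗ[ℝ] F)) hK hfK hTv hTw ?_
      (c := ⟪w, x⟫_ℝ / ⟪v, x⟫_ℝ) ?_
    · rw [abs_of_nonneg (by positivity)]
      exact pow_lt_pow_left₀ hlt (norm_nonneg _) two_ne_zero
    · have hxv : (⟪v, x⟫_ℝ)⁻¹ • x = v + (⟪w, x⟫_ℝ / ⟪v, x⟫_ℝ) • w := by
        calc _ = (⟪v, x⟫_ℝ)⁻¹ • (⟪v, x⟫_ℝ • v + ⟪w, x⟫_ℝ • w) := by rw [hx]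
          _ = _ := by
            rw [smul_add, smul_smul, smul_smul, inv_mul_cancel₀ hvx, one_smul, inv_mul_eq_div]
      exact hxv ▸ hK _ (inv_ne_zero hvx) x hxK
  · -- `T` is then the scalar `‖f‖ ^ 2`, so every unit vector realises the norm of `f`
    have hTy : ∀ y, T y = ‖f‖ ^ 2 • y := by
      intro y
      conv_lhs => rw [← o.inner_smul_add_inner_rightAngleRotation_smul hv y]
      rw [map_add, map_smul, map_smul, hTv, hTw, heq, smul_comm _ (‖f‖ ^ 2),
        smul_comm _ (‖f‖ ^ 2), ← smul_add, o.inner_smul_add_inner_rightAngleRotation_smul hv y]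
    have hx0 : x ≠ 0 := by rintro rfl; simp at hvx
    have hu : ‖‖x‖⁻¹ • x‖ = 1 := norm_smul_inv_norm (𝕜 := ℝ) hx0
    exact ⟨‖x‖⁻¹ • x, subset_closure (hK _ (by simpa using hx0) x hxK), hu,
      f.norm_apply_eq_opNorm_of_adjoint_apply_apply_eq hTy hu⟩

end ContinuousLinearMap

section Cone

variable {θ : E2} {β : ℝ}

theorem isOpen_cone : IsOpen (cone θ β) :=
  isOpen_ne.inter <| isOpen_lt (continuous_const.mul continuous_norm)
    (continuous_const.inner continuous_id).abs

theorem smul_mem_cone {a : ℝ} (ha : a ≠ 0) {x : E2} (hx : x ∈ cone θ β) : a • x ∈ cone θ β := by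
  refine ⟨smul_ne_zero ha hx.1, ?_⟩
  rw [norm_smul, real_inner_smul_right, abs_mul, Real.norm_eq_abs, mul_left_comm]
  exact mul_lt_mul_of_pos_left hx.2 (abs_pos.mpr ha)

theorem self_mem_cone (hθ : ‖θ‖ = 1) (hβ : 0 < β) (hβπ : β ≤ π) : θ ∈ cone θ β := by
  refine ⟨by rintro rfl; simp at hθ, ?_⟩
  rw [real_inner_self_eq_norm_sq, hθ, one_pow, abs_one, mul_one, ← Real.cos_zero]
  exact Real.cos_lt_cos_of_nonneg_of_le_pi le_rfl (by linarith) (by linarith)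

theorem cos_half_mul_norm_le_of_mem_closure_cone {x : E2} (hx : x ∈ closure (cone θ β)) :
    Real.cos (β / 2) * ‖x‖ ≤ |⟪θ, x⟫_ℝ| :=
  closure_minimal (t := {x | Real.cos (β / 2) * ‖x‖ ≤ |⟪θ, x⟫_ℝ|}) (fun _ hy => hy.2.le)
    (isClosed_le (continuous_const.mul continuous_norm)
      (continuous_const.inner continuous_id).abs) hx

theorem cos_mul_le_abs_inner_of_mem_closure_cone (hθ : ‖θ‖ = 1) (hβ : 0 ≤ β) (hβπ : β ≤ π)
    {y z : E2} (hy : y ∈ closure (cone θ β)) (hz : z ∈ closure (cone θ β)) :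
    Real.cos β * (‖y‖ * ‖z‖) ≤ |⟪y, z⟫_ℝ| := by
  have hcos : Real.cos β = 2 * Real.cos (β / 2) ^ 2 - 1 := by
    rw [← Real.cos_two_mul, mul_div_cancel₀ _ two_ne_zero]
  rw [hcos]
  exact two_mul_sq_sub_one_mul_le_abs_inner hθ
    (Real.cos_nonneg_of_mem_Icc ⟨by linarith [Real.pi_pos], by linarith⟩)
    (cos_half_mul_norm_le_of_mem_closure_cone hy) (cos_half_mul_norm_le_of_mem_closure_cone hz)

theorem cos_mul_opNorm_mul_norm_le_of_mapsTo_cone (f : E2 →L[ℝ] E2) (hθ : ‖θ‖ = 1) (hβ : 0 < β)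
    (hβπ : β ≤ π) (hf : MapsTo (ContinuousLinearMap.adjoint f ∘L f) (cone θ β) (cone θ β))
    {y : E2} (hy : y ∈ closure (cone θ β)) : Real.cos β * ‖f‖ * ‖y‖ ≤ ‖f y‖ := by
  have : Fact (Module.finrank ℝ E2 = 2) := ⟨by simp⟩
  obtain ⟨v, hvK, hv, hfv⟩ := f.exists_mem_closure_norm_eq_one_norm_apply_eq_opNorm isOpen_cone
    ⟨θ, self_mem_cone hθ hβ hβπ⟩ (fun _ ha _ hx => smul_mem_cone ha hx) hf
  calc Real.cos β * ‖f‖ * ‖y‖ = ‖f‖ * (Real.cos β * (‖v‖ * ‖y‖)) := by rw [hv]; ring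
    _ ≤ ‖f‖ * |⟪v, y⟫_ℝ| := by
        gcongr; exact cos_mul_le_abs_inner_of_mem_closure_cone hθ hβ.le hβπ hvK hy
    _ ≤ ‖f y‖ := f.opNorm_mul_abs_inner_le hv hfv y

end Cone

theorem mLin_one : mLin 1 = 1 := map_one (Matrix.toEuclideanCLM (n := Fin 2) (𝕜 := ℝ))

theorem mLin_mul (M N : Matrix (Fin 2) (Fin 2) ℝ) : mLin (M * N) = mLin M * mLin N :=
  map_mul (Matrix.toEuclideanCLM (n := Fin 2) (𝕜 := ℝ)) M N

theorem adjoint_mLin (M : Matrix (Fin 2) (Fin 2) ℝ) :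
    ContinuousLinearMap.adjoint (mLin M) = mLin Mᵀ := by
  rw [← ContinuousLinearMap.star_eq_adjoint, ← Matrix.conjTranspose_eq_transpose_of_trivial,
    ← Matrix.star_eq_conjTranspose]
  exact (map_star (Matrix.toEuclideanCLM (n := Fin 2) (𝕜 := ℝ)) M).symm

theorem wprod_append {κ : ℕ} (A : Fin κ → Matrix (Fin 2) (Fin 2) ℝ) (l l' : List (Fin κ)) :
    wprod A (l ++ l') = wprod A l * wprod A l' := by
  simp [wprod]

theorem transpose_wprod {κ : ℕ} (A : Fin κ → Matrix (Fin 2) (Fin 2) ℝ) (l : List (Fin κ)) :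
    (wprod A l)ᵀ = wprod (fun i => (A i)ᵀ) l.reverse := by
  simp [wprod, Matrix.transpose_list_prod, List.map_reverse, Function.comp_def]

theorem mapsTo_mLin_wprod {κ : ℕ} {A : Fin κ → Matrix (Fin 2) (Fin 2) ℝ} {K : Set E2}
    (hA : ∀ i, MapsTo (mLin (A i)) K K) (l : List (Fin κ)) :
    MapsTo (mLin (wprod A l)) K K := by
  induction l with
  | nil => simpa [wprod, mLin_one] using Set.mapsTo_id K
  | cons i l ih =>
    rw [show wprod A (i :: l) = A i * wprod A l from List.prod_cons, mLin_mul]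
    exact (hA i).comp ih

theorem a1_supermultiplicative_general (κ : ℕ)
    (A : Fin κ → Matrix (Fin 2) (Fin 2) ℝ)
    (θ : E2) (hθ : ‖θ‖ = 1) (β : ℝ) (hβ : 0 < β) (hβ' : β < π / 2)
    (hK1a : ∀ i, ∀ x ∈ closure (cone θ β), x ≠ 0 → Matrix.toEuclideanLin (A i) x ∈ cone θ β)
    (hK1b : ∀ i, ∀ x ∈ closure (cone θ β), x ≠ 0 → Matrix.toEuclideanLin (A i)ᵀ x ∈ cone θ β) :
    ∀ li lj : List (Fin κ), li ≠ [] → lj ≠ [] →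
      Real.cos β ^ 2 * a1 (wprod A li) * a1 (wprod A lj) ≤ a1 (wprod A (li ++ lj)) := by
  intro li lj _ _
  have hθK : θ ∈ cone θ β := self_mem_cone hθ hβ (by linarith [Real.pi_pos])
  have hA : ∀ l, MapsTo (mLin (wprod A l)) (cone θ β) (cone θ β) :=
    mapsTo_mLin_wprod fun i x hx => hK1a i x (subset_closure hx) hx.1
  have hAT : ∀ l, MapsTo (mLin (wprod (fun i => (A i)ᵀ) l)) (cone θ β) (cone θ β) :=
    mapsTo_mLin_wprod fun i x hx => hK1b i x (subset_closure hx) hx.1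
  have hlow : ∀ l, ∀ y ∈ closure (cone θ β),
      Real.cos β * a1 (wprod A l) * ‖y‖ ≤ ‖mLin (wprod A l) y‖ := fun l _ hy =>
    cos_mul_opNorm_mul_norm_le_of_mapsTo_cone _ hθ hβ (by linarith [Real.pi_pos])
      (by rw [adjoint_mLin, transpose_wprod]; exact (hAT _).comp (hA l)) hy
  have hcos : 0 ≤ Real.cos β := Real.cos_nonneg_of_mem_Icc ⟨by linarith, hβ'.le⟩
  have ha1 : 0 ≤ a1 (wprod A li) := norm_nonneg _
  calc Real.cos β ^ 2 * a1 (wprod A li) * a1 (wprod A lj)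
      = Real.cos β * a1 (wprod A li) * (Real.cos β * a1 (wprod A lj) * ‖θ‖) := by rw [hθ]; ring
    _ ≤ Real.cos β * a1 (wprod A li) * ‖mLin (wprod A lj) θ‖ := by
        gcongr; exact hlow lj θ (subset_closure hθK)
    _ ≤ ‖mLin (wprod A li) (mLin (wprod A lj) θ)‖ := hlow li _ (subset_closure (hA lj hθK))
    _ = ‖mLin (wprod A (li ++ lj)) θ‖ := by rw [wprod_append, mLin_mul]; rfl
    _ ≤ a1 (wprod A (li ++ lj)) := by simpa [hθ, a1] using (mLin (wprod A (li ++ lj))).le_opNorm θ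

/-- Lemma 4.1 (second part): under (K1a) and (K1b),
`α₁(A_{li lj}) ≥ cos²(β) α₁(A_li) α₁(A_lj)` for all finite words `li, lj`. -/
theorem a1_supermultiplicative (κ : ℕ) (hκ : 2 ≤ κ)
    (A : Fin κ → Matrix (Fin 2) (Fin 2) ℝ)
    (hinv : ∀ i, IsUnit (A i).det) (hnorm : ∀ i, a1 (A i) < 1)
    (θ : E2) (hθ : ‖θ‖ = 1) (β : ℝ) (hβ : 0 < β) (hβ' : β < π / 2)
    (hK1a : ∀ i, ∀ x ∈ closure (cone θ β), x ≠ 0 → Matrix.toEuclideanLin (A i) x ∈ cone θ β)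
    (hK1b : ∀ i, ∀ x ∈ closure (cone θ β), x ≠ 0 → Matrix.toEuclideanLin (A i)ᵀ x ∈ cone θ β) :
    ∀ li lj : List (Fin κ), li ≠ [] → lj ≠ [] →
      Real.cos β ^ 2 * a1 (wprod A li) * a1 (wprod A lj) ≤ a1 (wprod A (li ++ lj)) :=
  a1_supermultiplicative_general κ A θ hθ β hβ hβ' hK1a hK1b

end
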